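/- Let g : U × X → X be a measurable driven system with Polish input space U, (X, d_X) compact, and suppose g is uniformly continuous in the first variable uniformly in the second (for every ε > 0 there is δ > 0 such that d_U(u,v) < δ implies d_X(g(u,x), g(v,x)) < ε for all x ∈ X). Then for each fixed μ ∈ P_1(X), the map θ ↦ P_g(θ, μ) from (P_1(U), W) to (P_1(X), W) is continuous. -/

import Mathlib

/-!
Uniform continuity of `g` in its first variable together with boundedness of `X` makes every
`g · x` Lipschitz up to an additive error: if `d(u, v) < δ` forces `d(g u x, g v x) < ε`, then
`d(g u x, g v x) ≤ ε + K d(u, v)` with `K = (diam X + 1) / δ`. Gluing a coupling `π` of `θ` and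
`θ'` with an independent copy of `μ` and applying `g` on both sides yields a coupling of the two
pushforwards, so `W(P_g(θ, μ), P_g(θ', μ)) ≤ ε + K W(θ, θ')`. Let `θ' → θ`, then `ε → 0`.
-/

open MeasureTheory ENNReal

noncomputable def W1 {Y : Type*} [PseudoEMetricSpace Y] [MeasurableSpace Y]
    (μ ν : Measure Y) : ℝ≥0∞ :=
  ⨅ (π : Measure (Y × Y)) (_ : π.map Prod.fst = μ ∧ π.map Prod.snd = ν),
    ∫⁻ p, edist p.1 p.2 ∂π

theorem W1_le_lintegral_edist {Y : Type*} [PseudoEMetricSpace Y] [MeasurableSpace Y]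
    {μ ν : Measure Y} (π : Measure (Y × Y)) (hπ : π.map Prod.fst = μ ∧ π.map Prod.snd = ν) :
    W1 μ ν ≤ ∫⁻ p, edist p.1 p.2 ∂π :=
  iInf₂_le π hπ

theorem MeasureTheory.Measure.map_prod_map_left {V U X Y : Type*}
    [MeasurableSpace V] [MeasurableSpace U] [MeasurableSpace X] [MeasurableSpace Y]
    {p : V → U} {f : U × X → Y}
    (hp : Measurable p) (hf : Measurable f) (π : Measure V) (μ : Measure X)
    [SFinite π] [SFinite μ] :
    ((π.map p).prod μ).map f = (π.prod μ).map fun q ↦ f (p q.1, q.2) := by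
  have h := Measure.map_prod_map π μ hp measurable_id
  rw [Measure.map_id] at h
  rw [h, Measure.map_map hf (hp.prodMap measurable_id)]
  rfl

theorem W1_map_prod_le_lintegral {U X Y : Type*} [MeasurableSpace U] [PseudoEMetricSpace U]
    [MeasurableSpace X] [MeasurableSpace Y] [PseudoEMetricSpace Y]
    {f : U × X → Y} (hf : Measurable f) (μ : Measure X) [SFinite μ]
    {θ θ' : Measure U} (π : Measure (U × U)) [SFinite π]
    (hπ : π.map Prod.fst = θ ∧ π.map Prod.snd = θ') :
    W1 ((θ.prod μ).map f) ((θ'.prod μ).map f)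
      ≤ ∫⁻ q, edist (f (q.1.1, q.2)) (f (q.1.2, q.2)) ∂π.prod μ := by
  set F : (U × U) × X → Y × Y := fun q ↦ (f (q.1.1, q.2), f (q.1.2, q.2))
  have hF : Measurable F := by fun_prop
  refine (W1_le_lintegral_edist ((π.prod μ).map F) ⟨?_, ?_⟩).trans
    (lintegral_map_le (fun p : Y × Y ↦ edist p.1 p.2) F)
  · rw [Measure.map_map measurable_fst hF, ← hπ.1,
      Measure.map_prod_map_left measurable_fst hf]
    rfl
  · rw [Measure.map_map measurable_snd hF, ← hπ.2,
      Measure.map_prod_map_left measurable_snd hf]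
    rfl

theorem W1_map_prod_le_add_mul_W1 {U X Y : Type*} [MeasurableSpace U] [PseudoEMetricSpace U]
    [MeasurableSpace X] [MeasurableSpace Y] [PseudoEMetricSpace Y]
    {f : U × X → Y} (hf : Measurable f) (μ : Measure X) [IsProbabilityMeasure μ]
    (θ θ' : Measure U) [IsProbabilityMeasure θ] {c K : ℝ≥0∞} (hK₀ : K ≠ 0) (hK : K ≠ ⊤)
    (hfK : ∀ u v x, edist (f (u, x)) (f (v, x)) ≤ c + K * edist u v) :
    W1 ((θ.prod μ).map f) ((θ'.prod μ).map f) ≤ c + K * W1 θ θ' := by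
  simp only [W1, ENNReal.mul_iInf_of_ne hK₀ hK, ENNReal.add_iInf]
  refine le_iInf₂ fun π hπ ↦ ?_
  have : IsProbabilityMeasure π := by
    have : IsProbabilityMeasure (π.map Prod.fst) := by rw [hπ.1]; infer_instance
    exact Measure.isProbabilityMeasure_of_map Prod.fst
  calc _ ≤ ∫⁻ q, edist (f (q.1.1, q.2)) (f (q.1.2, q.2)) ∂π.prod μ :=
        W1_map_prod_le_lintegral hf μ π hπ
    _ ≤ ∫⁻ q, c + K * edist q.1.1 q.1.2 ∂π.prod μ := lintegral_mono fun q ↦ hfK _ _ _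
    _ ≤ ∫⁻ p, ∫⁻ _, c + K * edist p.1 p.2 ∂μ ∂π := lintegral_prod_le _
    _ = c + K * ∫⁻ p, edist p.1 p.2 ∂π := by
        simp only [lintegral_const, measure_univ, mul_one]
        rw [lintegral_add_left measurable_const, lintegral_const, measure_univ, mul_one,
          lintegral_const_mul' _ _ hK]

theorem edist_le_add_mul_edist_of_dist_lt {α β : Type*} [PseudoMetricSpace α]
    [PseudoMetricSpace β] {u v : α} {y y' : β} {e δ : ℝ} {K : ℝ≥0∞}
    (hy : edist y y' ≤ K * ENNReal.ofReal δ) (h : dist u v < δ → dist y y' < e) :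
    edist y y' ≤ ENNReal.ofReal e + K * edist u v := by
  rcases lt_or_ge (dist u v) δ with huv | huv
  · rw [edist_dist]
    exact le_add_right (ENNReal.ofReal_le_ofReal (h huv).le)
  · refine le_add_left (hy.trans (mul_le_mul_right ?_ K))
    rw [edist_dist]
    exact ENNReal.ofReal_le_ofReal huv

theorem exists_edist_le_mul_ofReal {β : Type*} [PseudoMetricSpace β] [BoundedSpace β]
    {δ : ℝ} (hδ : 0 < δ) :
    ∃ K : ℝ≥0∞, K ≠ 0 ∧ K ≠ ⊤ ∧ ∀ y y' : β, edist y y' ≤ K * ENNReal.ofReal δ := by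
  have hδ₀ : ENNReal.ofReal δ ≠ 0 := (ENNReal.ofReal_pos.mpr hδ).ne'
  refine ⟨(Metric.ediam (Set.univ : Set β) + 1) / ENNReal.ofReal δ,
    (ENNReal.div_pos (by simp) ENNReal.ofReal_ne_top).ne',
    ENNReal.div_ne_top (by simpa using (Bornology.isBounded_univ.mpr ‹_›).ediam_ne_top) hδ₀,
    fun y y' ↦ ?_⟩
  rw [ENNReal.div_mul_cancel hδ₀ ENNReal.ofReal_ne_top]
  exact (Metric.edist_le_ediam_of_mem (Set.mem_univ y) (Set.mem_univ y')).trans le_self_add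

theorem stmt_17_general {U X : Type*}
    [MeasurableSpace U] [MetricSpace U]
    [MeasurableSpace X] [MetricSpace X] [CompactSpace X]
    (g : U → X → X) (hg : Measurable (Function.uncurry g))
    (hu : ∀ ε : ℝ, 0 < ε → ∃ δ : ℝ, 0 < δ ∧
        ∀ u v : U, dist u v < δ → ∀ x : X, dist (g u x) (g v x) < ε)
    (μ : Measure X) [IsProbabilityMeasure μ]
    (θ : ℕ → Measure U) (θlim : Measure U)
    (hθ : ∀ n, IsProbabilityMeasure (θ n))
    (hconv : Filter.Tendsto (fun n => W1 (θ n) θlim) Filter.atTop (nhds 0)) :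
    Filter.Tendsto
      (fun n => W1 (((θ n).prod μ).map (Function.uncurry g))
                   ((θlim.prod μ).map (Function.uncurry g)))
      Filter.atTop (nhds 0) := by
  rw [ENNReal.tendsto_nhds_zero]
  intro ε hε
  obtain ⟨e, -, he, heε⟩ := ENNReal.lt_iff_exists_real_btwn.mp hε
  obtain ⟨δ, hδ, hgδ⟩ := hu e (ENNReal.ofReal_pos.mp he)
  obtain ⟨K, hK₀, hK, hdiam⟩ := exists_edist_le_mul_ofReal (β := X) hδ
  have hbound : ∀ n, W1 (((θ n).prod μ).map (Function.uncurry g))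
      ((θlim.prod μ).map (Function.uncurry g)) ≤ ENNReal.ofReal e + K * W1 (θ n) θlim :=
    fun n ↦ have := hθ n
    W1_map_prod_le_add_mul_W1 hg μ (θ n) θlim hK₀ hK fun u v x ↦
      edist_le_add_mul_edist_of_dist_lt (hdiam _ _) fun huv ↦ hgδ u v huv x
  have hlim : Filter.Tendsto (fun n ↦ ENNReal.ofReal e + K * W1 (θ n) θlim) Filter.atTop
      (nhds (ENNReal.ofReal e)) := by
    simpa using (ENNReal.Tendsto.const_mul hconv (Or.inr hK)).const_add (ENNReal.ofReal e)
  filter_upwards [hlim.eventually (gt_mem_nhds heε)] with n hn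
  exact (hbound n).trans hn.le

theorem stmt_17 {U X : Type*}
    [MeasurableSpace U] [MetricSpace U] [BorelSpace U] [PolishSpace U]
    [MeasurableSpace X] [MetricSpace X] [BorelSpace X] [CompactSpace X]
    (g : U → X → X) (hg : Measurable (Function.uncurry g))
    (hu : ∀ ε : ℝ, 0 < ε → ∃ δ : ℝ, 0 < δ ∧
        ∀ u v : U, dist u v < δ → ∀ x : X, dist (g u x) (g v x) < ε)
    (μ : Measure X) [IsProbabilityMeasure μ]
    (θ : ℕ → Measure U) (θlim : Measure U)
    (hθ : ∀ n, IsProbabilityMeasure (θ n)) (hθlim : IsProbabilityMeasure θlim)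
    (hθfin : ∀ n, ∃ u₀ : U, ∫⁻ u, edist u₀ u ∂(θ n) < ⊤)
    (hθlimfin : ∃ u₀ : U, ∫⁻ u, edist u₀ u ∂θlim < ⊤)
    (hconv : Filter.Tendsto (fun n => W1 (θ n) θlim) Filter.atTop (nhds 0)) :
    Filter.Tendsto
      (fun n => W1 (((θ n).prod μ).map (Function.uncurry g))
                   ((θlim.prod μ).map (Function.uncurry g)))
      Filter.atTop (nhds 0) :=
  stmt_17_general g hg hu μ θ θlim hθ hconv
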